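/- arXiv:1901.03155 — 4 statements merged into one kernel-verified Lean document; each statement's English description precedes it below -/
import Mathlib

section
/- For every tree process P and every n ≥ 1, the sum over all contexts c with |c| = n of Prob_P(c) is at most n+1. -/
/-- Labelled binary trees over an alphabet `A`. -/
inductive BTree (A : Type*) : Type _
  | leaf : A → BTree A
  | node : A → BTree A → BTree A → BTree A

/-- The number of leaves of a labelled binary tree. -/
def BTree.numLeaves {A : Type*} : BTree A → ℕ
  | .leaf _ => 1
  | .node _ l r => l.numLeaves + r.numLeaves

/-- Contexts over `A`: binary trees with one parameter leaf.  `Ctx.left a c t`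
denotes `a(c, t)`, `Ctx.right a t c` denotes `a(t, c)`. -/
inductive Ctx (A : Type*) : Type _
  | hole : Ctx A
  | left : A → Ctx A → BTree A → Ctx A
  | right : A → BTree A → Ctx A → Ctx A

/-- The size of a context: its number of leaves, not counting the parameter. -/
def Ctx.size {A : Type*} : Ctx A → ℕ
  | .hole => 0
  | .left _ c t => c.size + t.numLeaves
  | .right _ t c => t.numLeaves + c.size

/-- Histories (label/direction words), `false` = left, `true` = right. -/
abbrev History (A : Type*) := List (A × Bool)

/-- `Prob_P(t)` for a tree process `P`, with `z` the history of the root. -/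
def treeProb {A : Type*} (P : History A → A × Bool → ℝ) :
    History A → BTree A → ℝ
  | z, .leaf a => P z (a, false)
  | z, .node a l r =>
      P z (a, true) * treeProb P (z ++ [(a, false)]) l *
        treeProb P (z ++ [(a, true)]) r

/-- `Prob_P(c)` for a context `c`: the product of `P_{h(v)}(λ(v))` over all
nodes of `c` except the parameter node. -/
def ctxProb {A : Type*} (P : History A → A × Bool → ℝ) :
    History A → Ctx A → ℝ
  | _, .hole => 1
  | z, .left a c t =>
      P z (a, true) * ctxProb P (z ++ [(a, false)]) c *
        treeProb P (z ++ [(a, true)]) t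
  | z, .right a t c =>
      P z (a, true) * treeProb P (z ++ [(a, false)]) t *
        ctxProb P (z ++ [(a, true)]) c

/-!
Let `γₙ(z)` be the total weight of the contexts of size `n` and `Tₙ(z)` the probability of a
tree with at most `n` leaves, for the process started at history `z`. Splitting at the root
expresses both as convolutions of the same quantities at the two children, and the theorem
follows from the invariant `γₙ(z) + (n + 1) Tₙ(z) ≤ n + 1`, proved by strong induction on `n`.
(Combinatorially: a tree with more than `n` leaves has at most `n + 1` nodes whose context has
`n` leaves, and a tree with at most `n` leaves has none.)

In the induction step, fix the root label and let `u, v` be the leaf-count distributions of the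
two subtrees. Applying the hypothesis `γₘ ≤ (m + 1)(1 - Tₘ)` inside the convolutions leaves a sum
over pairs of leaf counts `(i, j)` with weight `n + 1 - i - j` on the triangle `i + j ≤ n`;
extending it to the square only adds terms with weight `≤ 0`, and the square sum factors. What
remains is `(n + 1)(1 - U)(1 - V) + M_U (1 - V) + M_V (1 - U) ≥ 0`, where `U, V` are the masses
and `M_U, M_V` the first moments of `u, v` up to `n`, and `U, V ≤ 1` is the separate,
easier induction `Tₙ ≤ 1`.
-/

open Finset

namespace BTree

variable {A : Type*}

theorem one_le_numLeaves : ∀ t : BTree A, 1 ≤ t.numLeaves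
  | .leaf _ => le_rfl
  | .node _ l _ => le_add_right l.one_le_numLeaves

def equivSum : A ⊕ A × (BTree A × BTree A) ≃ BTree A where
  toFun
    | .inl a => leaf a
    | .inr (a, l, r) => node a l r
  invFun
    | leaf a => .inl a
    | node a l r => .inr (a, l, r)
  left_inv s := by rcases s with a | ⟨a, l, r⟩ <;> rfl
  right_inv t := by cases t <;> rfl

theorem finite_setOf_numLeaves_le [Finite A] (k : ℕ) :
    {t : BTree A | t.numLeaves ≤ k}.Finite := by
  induction k with
  | zero =>
    exact Set.finite_empty.subset fun t (ht : t.numLeaves ≤ 0) =>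
      absurd t.one_le_numLeaves (by omega)
  | succ k ih =>
    refine ((Set.finite_range leaf).union
      ((Set.finite_univ.prod (ih.prod ih)).image fun x => node x.1 x.2.1 x.2.2)).subset ?_
    rintro (a | ⟨a, l, r⟩) ht
    · exact .inl ⟨a, rfl⟩
    · have := l.one_le_numLeaves
      have := r.one_le_numLeaves
      have ht : l.numLeaves + r.numLeaves ≤ k + 1 := ht
      exact .inr ⟨(a, l, r), ⟨trivial, (by omega : l.numLeaves ≤ k),
        (by omega : r.numLeaves ≤ k)⟩, rfl⟩

theorem finite_numLeaves_preimage [Finite A] (k : ℕ) :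
    (numLeaves ⁻¹' {k} : Set (BTree A)).Finite :=
  (finite_setOf_numLeaves_le k).subset fun _ ht => le_of_eq ht

theorem tsum_eq_leaf_add_node [Fintype A] {f : BTree A → ℝ} (hf : Summable f) :
    ∑' t, f t = ∑ a, f (leaf a) + ∑ a, ∑' p : BTree A × BTree A, f (node a p.1 p.2) := by
  have hfe : Summable fun s => f (equivSum s) := equivSum.summable_iff.mpr hf
  have hnode : Summable fun q : A × (BTree A × BTree A) => f (equivSum (.inr q)) :=
    hfe.comp_injective Sum.inr_injective
  rw [← equivSum.tsum_eq, hfe.comp_injective Sum.inl_injective |>.tsum_sum hnode,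
    tsum_fintype, hnode.tsum_prod' hnode.prod_factor, tsum_fintype]
  rfl

end BTree

namespace Ctx

variable {A : Type*}

def equivSum :
    Unit ⊕ (A × (Ctx A × BTree A)) ⊕ (A × (BTree A × Ctx A)) ≃ Ctx A where
  toFun
    | .inl _ => hole
    | .inr (.inl (a, c, t)) => left a c t
    | .inr (.inr (a, t, c)) => right a t c
  invFun
    | hole => .inl ⟨⟩
    | left a c t => .inr (.inl (a, c, t))
    | right a t c => .inr (.inr (a, t, c))
  left_inv s := by rcases s with _ | ⟨a, c, t⟩ | ⟨a, t, c⟩ <;> rfl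
  right_inv c := by cases c <;> rfl

theorem finite_setOf_size_le [Finite A] (n : ℕ) : {c : Ctx A | c.size ≤ n}.Finite := by
  induction n with
  | zero =>
    refine (Set.finite_singleton hole).subset ?_
    rintro (_ | ⟨a, c, t⟩ | ⟨a, t, c⟩) hc
    · rfl
    all_goals
      have := t.one_le_numLeaves
      simp only [Set.mem_ofPred_eq, size] at hc
      omega
  | succ n ih =>
    have hT := BTree.finite_setOf_numLeaves_le (A := A) (n + 1)
    refine (((Set.finite_singleton hole).union
      ((Set.finite_univ.prod (ih.prod hT)).image fun x => left x.1 x.2.1 x.2.2)).union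
      ((Set.finite_univ.prod (hT.prod ih)).image fun x => right x.1 x.2.1 x.2.2)).subset ?_
    rintro (_ | ⟨a, c, t⟩ | ⟨a, t, c⟩) hc
    · exact .inl (.inl rfl)
    · have hc : c.size + t.numLeaves ≤ n + 1 := hc
      have := t.one_le_numLeaves
      exact .inl (.inr ⟨(a, c, t), ⟨trivial, (by omega : c.size ≤ n),
        (by omega : t.numLeaves ≤ n + 1)⟩, rfl⟩)
    · have hc : t.numLeaves + c.size ≤ n + 1 := hc
      have := t.one_le_numLeaves
      exact .inr ⟨(a, t, c), ⟨trivial, (by omega : t.numLeaves ≤ n + 1),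
        (by omega : c.size ≤ n)⟩, rfl⟩

theorem finite_size_preimage [Finite A] (n : ℕ) : (size ⁻¹' {n} : Set (Ctx A)).Finite :=
  (finite_setOf_size_le n).subset fun _ hc => le_of_eq hc

theorem tsum_eq_hole_add_left_add_right [Fintype A] {f : Ctx A → ℝ} (hf : Summable f) :
    ∑' c, f c = f hole + ∑ a, ∑' p : Ctx A × BTree A, f (left a p.1 p.2) +
      ∑ a, ∑' p : BTree A × Ctx A, f (right a p.1 p.2) := by
  have hfe : Summable fun s => f (equivSum s) := equivSum.summable_iff.mpr hf
  have hlr : Summable fun q : (A × (Ctx A × BTree A)) ⊕ (A × (BTree A × Ctx A)) =>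
      f (equivSum (.inr q)) :=
    hfe.comp_injective Sum.inr_injective
  have hl : Summable fun q : A × (Ctx A × BTree A) => f (equivSum (.inr (.inl q))) :=
    hlr.comp_injective Sum.inl_injective
  have hr : Summable fun q : A × (BTree A × Ctx A) => f (equivSum (.inr (.inr q))) :=
    hlr.comp_injective Sum.inr_injective
  rw [← equivSum.tsum_eq,
    Summable.tsum_sum (f := fun s => f (equivSum s)) (hfe.comp_injective Sum.inl_injective) hlr,
    Summable.tsum_sum (f := fun q => f (equivSum (.inr q))) hl hr, tsum_fintype,
    hl.tsum_prod' hl.prod_factor, hr.tsum_prod' hr.prod_factor, tsum_fintype, tsum_fintype,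
    Fintype.sum_unique, add_assoc]
  rfl

end Ctx

section GradedSum

variable {α β ι κ : Type*}

theorem finite_prodMap_preimage {dα : α → ι} {dβ : β → κ} (hα : ∀ i, (dα ⁻¹' {i}).Finite)
    (hβ : ∀ j, (dβ ⁻¹' {j}).Finite) (ij : ι × κ) : (Prod.map dα dβ ⁻¹' {ij}).Finite := by
  rw [← Set.singleton_prod_singleton, Set.preimage_prod_map_prod]
  exact (hα ij.1).prod (hβ ij.2)

variable [DecidableEq ι] [DecidableEq κ]

noncomputable def gradedSum (d : α → ι) (f : α → ℝ) (k : ι) : ℝ :=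
  ∑' a, if d a = k then f a else 0

theorem tsum_subtype_eq_gradedSum (d : α → ι) (f : α → ℝ) (k : ι) :
    ∑' a : {a // d a = k}, f a = gradedSum d f k :=
  (tsum_subtype {a | d a = k} f).trans (tsum_congr fun _ => Set.indicator_apply _ _ _)

theorem summable_ite_eq {d : α → ι} (hd : ∀ k, (d ⁻¹' {k}).Finite) (f : α → ℝ) (k : ι) :
    Summable fun a => if d a = k then f a else 0 :=
  summable_of_hasFiniteSupport <| (hd k).subset <| Function.support_subset_iff'.2 fun _ ha =>
    if_neg ha

theorem summable_ite_mem {d : α → ι} (hd : ∀ k, (d ⁻¹' {k}).Finite) (f : α → ℝ)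
    (s : Finset ι) : Summable fun a => if d a ∈ s then f a else 0 :=
  summable_of_hasFiniteSupport <| (s.finite_toSet.preimage' fun k _ => hd k).subset <|
    Function.support_subset_iff'.2 fun _ ha => if_neg ha

theorem sum_gradedSum {d : α → ι} (hd : ∀ k, (d ⁻¹' {k}).Finite) (f : α → ℝ) (s : Finset ι) :
    ∑ k ∈ s, gradedSum d f k = ∑' a, if d a ∈ s then f a else 0 := by
  unfold gradedSum
  rw [← Summable.tsum_finsetSum fun k _ => summable_ite_eq hd f k]
  exact tsum_congr fun a => sum_ite_eq s (d a) fun _ => f a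

theorem gradedSum_prodMap {dα : α → ι} {dβ : β → κ} (hα : ∀ i, (dα ⁻¹' {i}).Finite)
    (hβ : ∀ j, (dβ ⁻¹' {j}).Finite) (f : α → ℝ) (g : β → ℝ) (ij : ι × κ) :
    gradedSum (Prod.map dα dβ) (fun p => f p.1 * g p.2) ij =
      gradedSum dα f ij.1 * gradedSum dβ g ij.2 := by
  have hprod : ∀ p : α × β, (if Prod.map dα dβ p = ij then f p.1 * g p.2 else 0) =
      (if dα p.1 = ij.1 then f p.1 else 0) * (if dβ p.2 = ij.2 then g p.2 else 0) := fun p => by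
    simp only [ite_zero_mul_ite_zero, Prod.ext_iff, Prod.map_fst, Prod.map_snd]
  have hsum := (summable_ite_eq (finite_prodMap_preimage hα hβ) _ ij).congr hprod
  rw [gradedSum, gradedSum, gradedSum,
    Summable.tsum_mul_tsum (summable_ite_eq hα f ij.1) (summable_ite_eq hβ g ij.2) hsum]
  exact tsum_congr hprod

theorem tsum_ite_mem_mul {dα : α → ι} {dβ : β → κ} (hα : ∀ i, (dα ⁻¹' {i}).Finite)
    (hβ : ∀ j, (dβ ⁻¹' {j}).Finite) (f : α → ℝ) (g : β → ℝ) (s : Finset (ι × κ)) :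
    ∑' p : α × β, (if Prod.map dα dβ p ∈ s then f p.1 * g p.2 else 0) =
      ∑ ij ∈ s, gradedSum dα f ij.1 * gradedSum dβ g ij.2 := by
  rw [← sum_gradedSum (finite_prodMap_preimage hα hβ)]
  exact sum_congr rfl fun ij _ => gradedSum_prodMap hα hβ f g ij

end GradedSum

section Sequences

variable {u v g h : ℕ → ℝ} {n : ℕ}

theorem sum_range_ite_add_le_eq (f : ℕ → ℝ) {j : ℕ} (hj : j ≤ n) :
    ∑ i ∈ range (n + 1), (if i + j ≤ n then f i else 0) = ∑ i ∈ range (n - j + 1), f i := by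
  rw [← sum_filter]
  congr 1
  ext i
  simp only [mem_filter, mem_range]
  omega

theorem sum_sum_ite_le_mul (hu : ∀ i, 0 ≤ u i) (hv : ∀ j, 0 ≤ v j) (hu0 : u 0 = 0)
    (hv0 : v 0 = 0) :
    ∑ i ∈ range (n + 2), ∑ j ∈ range (n + 2), (if i + j ≤ n + 1 then u i * v j else 0) ≤
      (∑ i ∈ range (n + 1), u i) * ∑ j ∈ range (n + 1), v j := by
  have hedge : ∀ i j, i = n + 1 ∨ j = n + 1 → (if i + j ≤ n + 1 then u i * v j else 0) = 0 := by
    intro i j hij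
    split_ifs with hle
    · obtain rfl | rfl : j = 0 ∨ i = 0 := by omega
      · rw [hv0, mul_zero]
      · rw [hu0, zero_mul]
    · rfl
  simp only [sum_range_succ _ (n + 1), hedge _ _ (.inl rfl), hedge _ _ (.inr rfl), sum_const_zero,
    add_zero, sum_mul_sum]
  gcongr with i _ j _
  split_ifs
  · exact le_rfl
  · exact mul_nonneg (hu i) (hv j)

theorem sum_sum_ite_mul_le (hu : ∀ i, 0 ≤ u i) (hv : ∀ j, 0 ≤ v j) :
    ∑ i ∈ range (n + 1), ∑ j ∈ range (n + 1),
        (if i + j ≤ n then ((i : ℝ) + j - (n + 1)) * (u i * v j) else 0) ≤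
      (∑ i ∈ range (n + 1), (i : ℝ) * u i) * ∑ j ∈ range (n + 1), v j +
        (∑ i ∈ range (n + 1), u i) * ∑ j ∈ range (n + 1), (j : ℝ) * v j -
        (n + 1) * ((∑ i ∈ range (n + 1), u i) * ∑ j ∈ range (n + 1), v j) := by
  calc _ ≤ ∑ i ∈ range (n + 1), ∑ j ∈ range (n + 1), ((i : ℝ) + j - (n + 1)) * (u i * v j) := by
        gcongr with i _ j _
        split_ifs with hij
        · exact le_rfl
        · have : (n : ℝ) + 1 ≤ i + j := by exact_mod_cast (by omega : n + 1 ≤ i + j)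
          exact mul_nonneg (by linarith) (mul_nonneg (hu i) (hv j))
    _ = _ := by
        rw [sum_mul_sum, sum_mul_sum, sum_mul_sum, mul_sum, ← sum_add_distrib, ← sum_sub_distrib]
        refine sum_congr rfl fun i _ => ?_
        rw [mul_sum, ← sum_add_distrib, ← sum_sub_distrib]
        refine sum_congr rfl fun j _ => ?_
        ring

theorem sum_antidiagonal_mul_le (hv : ∀ j, 0 ≤ v j) (hv0 : v 0 = 0)
    (hg : ∀ m < n, g m + (m + 1) * ∑ i ∈ range (m + 1), u i ≤ m + 1) :
    ∑ p ∈ antidiagonal n, g p.1 * v p.2 ≤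
      ∑ j ∈ range (n + 1), (((n : ℝ) + 1 - j) * v j -
        ∑ i ∈ range (n + 1), if i + j ≤ n then ((n : ℝ) + 1 - j) * (u i * v j) else 0) := by
  rw [← Nat.sum_antidiagonal_swap, Nat.sum_antidiagonal_eq_sum_range_succ_mk]
  refine sum_le_sum fun j hj => ?_
  have hjn : j ≤ n := Nat.lt_succ_iff.mp (mem_range.mp hj)
  rcases j.eq_zero_or_pos with rfl | hj0
  · simp [hv0]
  · have hgj := hg (n - j) (by omega)
    rw [Nat.cast_sub hjn] at hgj
    rw [sum_range_ite_add_le_eq _ hjn, ← mul_sum, ← sum_mul, Prod.swap_prod_mk]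
    linarith [mul_le_mul_of_nonneg_left hgj (hv j)]

theorem sum_antidiagonal_add_mul_sum_sum_ite_le (hu : ∀ i, 0 ≤ u i) (hv : ∀ j, 0 ≤ v j)
    (hu0 : u 0 = 0) (hv0 : v 0 = 0)
    (hU : ∑ i ∈ range (n + 1), u i ≤ 1) (hV : ∑ j ∈ range (n + 1), v j ≤ 1)
    (hg : ∀ m < n, g m + (m + 1) * ∑ i ∈ range (m + 1), u i ≤ m + 1)
    (hh : ∀ m < n, h m + (m + 1) * ∑ j ∈ range (m + 1), v j ≤ m + 1) :
    ∑ p ∈ antidiagonal n, (g p.1 * v p.2 + u p.1 * h p.2) +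
      (n + 1) * ∑ i ∈ range (n + 1), ∑ j ∈ range (n + 1), (if i + j ≤ n then u i * v j else 0)
      ≤ n + 1 := by
  have hlin : ∀ w : ℕ → ℝ, ∑ j ∈ range (n + 1), ((n : ℝ) + 1 - j) * w j =
      (n + 1) * ∑ j ∈ range (n + 1), w j - ∑ j ∈ range (n + 1), (j : ℝ) * w j := fun w => by
    simp only [sub_mul, add_mul, sum_sub_distrib, sum_add_distrib, mul_sum, one_mul]
  have hX := sum_antidiagonal_mul_le hv hv0 hg
  have hY := sum_antidiagonal_mul_le hu hu0 hh
  simp only [sum_sub_distrib, hlin] at hX hY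
  have htriangle : (n + 1) * ∑ i ∈ range (n + 1), ∑ j ∈ range (n + 1),
        (if i + j ≤ n then u i * v j else 0) -
      ∑ j ∈ range (n + 1), ∑ i ∈ range (n + 1),
        (if i + j ≤ n then ((n : ℝ) + 1 - j) * (u i * v j) else 0) -
      ∑ i ∈ range (n + 1), ∑ j ∈ range (n + 1),
        (if j + i ≤ n then ((n : ℝ) + 1 - i) * (v j * u i) else 0) =
      ∑ i ∈ range (n + 1), ∑ j ∈ range (n + 1),
        (if i + j ≤ n then ((i : ℝ) + j - (n + 1)) * (u i * v j) else 0) := by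
    rw [sum_comm (f := fun j i => if i + j ≤ n then ((n : ℝ) + 1 - j) * (u i * v j) else 0)]
    simp only [mul_sum, ← sum_sub_distrib]
    refine sum_congr rfl fun i _ => sum_congr rfl fun j _ => ?_
    rw [add_comm j i]
    split_ifs <;> ring
  have hsquare := sum_sum_ite_mul_le hu hv (n := n)
  rw [← htriangle] at hsquare
  rw [sum_add_distrib, ← Nat.sum_antidiagonal_swap (f := fun p => u p.1 * h p.2)]
  simp only [Prod.fst_swap, Prod.snd_swap, mul_comm (u _) (h _)]
  set U := ∑ i ∈ range (n + 1), u i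
  set V := ∑ j ∈ range (n + 1), v j
  have hMU : 0 ≤ ∑ i ∈ range (n + 1), (i : ℝ) * u i :=
    sum_nonneg fun i _ => mul_nonneg i.cast_nonneg (hu i)
  have hMV : 0 ≤ ∑ j ∈ range (n + 1), (j : ℝ) * v j :=
    sum_nonneg fun j _ => mul_nonneg j.cast_nonneg (hv j)
  linarith [mul_nonneg (mul_nonneg (n.cast_nonneg (α := ℝ)) (sub_nonneg.2 hU)) (sub_nonneg.2 hV),
    mul_nonneg (sub_nonneg.2 hU) (sub_nonneg.2 hV), mul_nonneg hMU (sub_nonneg.2 hV),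
    mul_nonneg hMV (sub_nonneg.2 hU)]

end Sequences

section TreeProcess

variable {A : Type*} (P : History A → A × Bool → ℝ)

noncomputable def treeMass (z : History A) : ℕ → ℝ :=
  gradedSum BTree.numLeaves (treeProb P z)

noncomputable def ctxMass (z : History A) : ℕ → ℝ :=
  gradedSum Ctx.size (ctxProb P z)

variable {P}

theorem treeProb_nonneg (hP0 : ∀ z x, 0 ≤ P z x) (z : History A) (t : BTree A) :
    0 ≤ treeProb P z t := by
  induction t generalizing z with
  | leaf a => exact hP0 z _
  | node a l r ihl ihr => exact mul_nonneg (mul_nonneg (hP0 z _) (ihl _)) (ihr _)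

theorem treeMass_nonneg (hP0 : ∀ z x, 0 ≤ P z x) (z : History A) (k : ℕ) :
    0 ≤ treeMass P z k :=
  tsum_nonneg fun t => by split_ifs <;> simp [treeProb_nonneg hP0]

theorem treeMass_zero (z : History A) : treeMass P z 0 = 0 := by
  simp [treeMass, gradedSum, Nat.one_le_iff_ne_zero.mp (BTree.one_le_numLeaves _)]

theorem sum_range_treeMass_eq [Fintype A] {n : ℕ} (hn : 0 < n) (z : History A) :
    ∑ k ∈ range (n + 1), treeMass P z k = ∑ a, P z (a, false) +
      ∑ a, P z (a, true) * ∑ i ∈ range (n + 1), ∑ j ∈ range (n + 1),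
        if i + j ≤ n then treeMass P (z ++ [(a, false)]) i * treeMass P (z ++ [(a, true)]) j
        else 0 := by
  have hd := BTree.finite_numLeaves_preimage (A := A)
  have htri : ∀ F : ℕ → ℕ → ℝ,
      ∑ i ∈ range (n + 1), ∑ j ∈ range (n + 1), (if i + j ≤ n then F i j else 0) =
        ∑ p ∈ range (n + 1) ×ˢ range (n + 1) with p.1 + p.2 ≤ n, F p.1 p.2 := fun F => by
    rw [sum_filter, sum_product]
  simp only [treeMass, htri]
  rw [sum_gradedSum hd, BTree.tsum_eq_leaf_add_node (summable_ite_mem hd _ _)]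
  congr 1
  · refine sum_congr rfl fun a _ => ?_
    rw [if_pos (by simp [BTree.numLeaves]; omega)]
    rfl
  · refine sum_congr rfl fun a _ => ?_
    rw [← tsum_ite_mem_mul hd hd, ← tsum_mul_left]
    refine tsum_congr fun p => ?_
    simp only [treeProb, BTree.numLeaves, Prod.map, mem_filter, mem_product, mem_range, mul_ite,
      mul_zero]
    exact if_congr (by omega) (by ring) rfl

theorem ctxMass_eq [Fintype A] (z : History A) (n : ℕ) :
    ctxMass P z n = (if n = 0 then 1 else 0) + ∑ a, P z (a, true) *
      ∑ p ∈ antidiagonal n,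
        (ctxMass P (z ++ [(a, false)]) p.1 * treeMass P (z ++ [(a, true)]) p.2 +
          treeMass P (z ++ [(a, false)]) p.1 * ctxMass P (z ++ [(a, true)]) p.2) := by
  have hT := BTree.finite_numLeaves_preimage (A := A)
  have hC := Ctx.finite_size_preimage (A := A)
  simp only [ctxMass, treeMass, mul_add, sum_add_distrib]
  rw [gradedSum, Ctx.tsum_eq_hole_add_left_add_right (summable_ite_eq hC _ _), add_assoc]
  congr 1
  · simp [Ctx.size, ctxProb, eq_comm]
  congr 1
  · refine sum_congr rfl fun a _ => ?_
    rw [← tsum_ite_mem_mul hC hT, ← tsum_mul_left]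
    refine tsum_congr fun p => ?_
    simp only [ctxProb, Ctx.size, Prod.map, HasAntidiagonal.mem_antidiagonal, mul_ite, mul_zero]
    exact if_congr Iff.rfl (by ring) rfl
  · refine sum_congr rfl fun a _ => ?_
    rw [← tsum_ite_mem_mul hT hC, ← tsum_mul_left]
    refine tsum_congr fun p => ?_
    simp only [ctxProb, Ctx.size, Prod.map, HasAntidiagonal.mem_antidiagonal, mul_ite, mul_zero]
    exact if_congr Iff.rfl (by ring) rfl

theorem sum_apply_false_add_sum_apply_true [Fintype A] (hP1 : ∀ z, ∑ x : A × Bool, P z x = 1)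
    (z : History A) : ∑ a, P z (a, false) + ∑ a, P z (a, true) = 1 := by
  rw [← hP1 z, Fintype.sum_prod_type_right, Fintype.sum_bool, add_comm]

theorem sum_range_treeMass_le_one [Fintype A] (hP0 : ∀ z x, 0 ≤ P z x)
    (hP1 : ∀ z, ∑ x : A × Bool, P z x = 1) : ∀ (n : ℕ) (z : History A),
    ∑ k ∈ range (n + 1), treeMass P z k ≤ 1
  | 0, z => by simp [treeMass_zero]
  | n + 1, z => by
    rw [sum_range_treeMass_eq n.succ_pos]
    calc _ ≤ ∑ a, P z (a, false) + ∑ a, P z (a, true) * 1 := by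
          gcongr with a
          · exact hP0 _ _
          · exact (sum_sum_ite_le_mul (treeMass_nonneg hP0 _) (treeMass_nonneg hP0 _)
              (treeMass_zero _) (treeMass_zero _)).trans
              (mul_le_one₀ (sum_range_treeMass_le_one hP0 hP1 n _)
                (sum_nonneg fun k _ => treeMass_nonneg hP0 _ k)
                (sum_range_treeMass_le_one hP0 hP1 n _))
      _ = 1 := by simp only [mul_one, sum_apply_false_add_sum_apply_true hP1]

theorem ctxMass_add_mul_sum_range_treeMass_le [Fintype A] (hP0 : ∀ z x, 0 ≤ P z x)
    (hP1 : ∀ z, ∑ x : A × Bool, P z x = 1) (n : ℕ) (z : History A) :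
    ctxMass P z n + (n + 1) * ∑ k ∈ range (n + 1), treeMass P z k ≤ n + 1 := by
  induction n using Nat.strong_induction_on generalizing z with
  | _ n ih =>
  rcases n.eq_zero_or_pos with rfl | hn
  · rw [ctxMass_eq]
    simp [treeMass_zero]
  have hkey : ∀ a, P z (a, true) * ∑ p ∈ antidiagonal n,
        (ctxMass P (z ++ [(a, false)]) p.1 * treeMass P (z ++ [(a, true)]) p.2 +
          treeMass P (z ++ [(a, false)]) p.1 * ctxMass P (z ++ [(a, true)]) p.2) +
      (n + 1) * (P z (a, true) * ∑ i ∈ range (n + 1), ∑ j ∈ range (n + 1),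
        if i + j ≤ n then treeMass P (z ++ [(a, false)]) i * treeMass P (z ++ [(a, true)]) j
        else 0) ≤ (n + 1) * P z (a, true) := fun a => by
    have := sum_antidiagonal_add_mul_sum_sum_ite_le (treeMass_nonneg hP0 (z ++ [(a, false)]))
      (treeMass_nonneg hP0 (z ++ [(a, true)])) (treeMass_zero _) (treeMass_zero _)
      (sum_range_treeMass_le_one hP0 hP1 n _) (sum_range_treeMass_le_one hP0 hP1 n _)
      (fun m hm => ih m hm _) (fun m hm => ih m hm _)
    linarith [mul_le_mul_of_nonneg_left this (hP0 z (a, true))]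
  rw [ctxMass_eq, if_neg hn.ne', zero_add, sum_range_treeMass_eq hn]
  have hsum := sum_le_sum fun a (_ : a ∈ univ) => hkey a
  rw [sum_add_distrib, ← mul_sum, ← mul_sum] at hsum
  linear_combination hsum + ((n : ℝ) + 1) * sum_apply_false_add_sum_apply_true hP1 z

end TreeProcess

theorem tsum_ctxProb_le_general {A : Type*} [Fintype A]
    (P : History A → A × Bool → ℝ)
    (hP0 : ∀ z x, 0 ≤ P z x) (hP1 : ∀ z, ∑ x : A × Bool, P z x = 1)
    (n : ℕ) :
    ∑' c : {c : Ctx A // c.size = n}, ctxProb P [] c.val ≤ n + 1 := by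
  have hinv := ctxMass_add_mul_sum_range_treeMass_le hP0 hP1 n []
  have hT : 0 ≤ ∑ k ∈ range (n + 1), treeMass P [] k :=
    sum_nonneg fun k _ => treeMass_nonneg hP0 [] k
  rw [show ∑' c : {c : Ctx A // c.size = n}, ctxProb P [] c.val = ctxMass P [] n from
    tsum_subtype_eq_gradedSum _ _ _]
  linarith [mul_nonneg (n.cast_add_one_pos (α := ℝ)).le hT]

/-- For every tree process `P` and every `n ≥ 1`, the sum of `Prob_P(c)` over
all contexts `c` with `|c| = n` is at most `n + 1`. -/
theorem tsum_ctxProb_le {A : Type*} [Fintype A]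
    (P : History A → A × Bool → ℝ)
    (hP0 : ∀ z x, 0 ≤ P z x) (hP1 : ∀ z, ∑ x : A × Bool, P z x = 1)
    (n : ℕ) (hn : 1 ≤ n) :
    ∑' c : {c : Ctx A // c.size = n}, ctxProb P [] c.val ≤ n + 1 :=
  tsum_ctxProb_le_general P hP0 hP1 n
end

section
/- For every node u of the derivation tree T_G of a normal-form TSLP, the tree or context s_u derived at u satisfies: if s_u is a tree then 2|s_u| − 1 equals the number of leaves of the subtree of T_G rooted at u, and if s_u is a context then 2|s_u| equals that number of leaves. -/
/-- Substitution of a tree into a context: `c[t]`. -/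
def Ctx.subst {A : Type*} : Ctx A → BTree A → BTree A
  | .hole, s => s
  | .left a c t, s => .node a (c.subst s) t
  | .right a t c, s => .node a t (c.subst s)

/-- Composition of contexts: `c[d]`. -/
def Ctx.comp {A : Type*} : Ctx A → Ctx A → Ctx A
  | .hole, d => d
  | .left a c t, d => .left a (c.comp d) t
  | .right a t c, d => .right a t (c.comp d)

/-- A tree or a context (the possible values `val_G(α)` derived from a symbol
`α` of a normal-form TSLP). -/
inductive TcVal (A : Type*) : Type _
  | tree : BTree A → TcVal A
  | ctx : Ctx A → TcVal A

/-- The size `|s|` of a tree or context: its number of (non-parameter) leaves. -/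
def TcVal.size {A : Type*} : TcVal A → ℕ
  | .tree t => t.numLeaves
  | .ctx c => c.size

/-- Derivation trees of a normal-form TSLP: binary trees each of whose nodes
`u` is annotated with the derived tree or context `s_u`. -/
inductive DTree (A : Type*) : Type _
  | lf : TcVal A → DTree A
  | nd : TcVal A → DTree A → DTree A → DTree A

/-- The annotation `s_u` of the root `u` of a derivation tree. -/
def DTree.root {A : Type*} : DTree A → TcVal A
  | .lf s => s
  | .nd s _ _ => s

/-- The ways the value at a node of the derivation tree of a normal-form TSLP
is obtained from the values of its two children, according to the right-hand
side forms `A_j(α)`, `A_j(A_k(x))`, `a(α,x)` and `a(x,α)`. -/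
inductive combineOK {A : Type*} : TcVal A → TcVal A → TcVal A → Prop
  | subst (c : Ctx A) (t : BTree A) :
      combineOK (.ctx c) (.tree t) (.tree (c.subst t))
  | comp (c d : Ctx A) :
      combineOK (.ctx c) (.ctx d) (.ctx (c.comp d))
  | leftArg (a : A) (t : BTree A) :
      combineOK (.tree (.leaf a)) (.tree t) (.ctx (.right a t .hole))
  | rightArg (a : A) (t : BTree A) :
      combineOK (.tree (.leaf a)) (.tree t) (.ctx (.left a .hole t))

/-- A (full) derivation tree of a normal-form TSLP: leaves are labelled with
terminal symbols, and the value at each internal node is obtained from the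
values of its children as prescribed by a normal-form right-hand side. -/
def DTree.consistent {A : Type*} : DTree A → Prop
  | .lf s => ∃ a : A, s = .tree (.leaf a)
  | .nd s l r => combineOK l.root r.root s ∧ l.consistent ∧ r.consistent

/-- The number of leaves of a derivation tree. -/
def DTree.numLeaves {A : Type*} : DTree A → ℕ
  | .lf _ => 1
  | .nd _ l r => l.numLeaves + r.numLeaves

/-- `Subt d D`: `d` is the subtree of `D` rooted at some node of `D`. -/
inductive Subt {A : Type*} : DTree A → DTree A → Prop
  | refl (d : DTree A) : Subt d d
  | left {d l : DTree A} (s : TcVal A) (r : DTree A) :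
      Subt d l → Subt d (.nd s l r)
  | right {d r : DTree A} (s : TcVal A) (l : DTree A) :
      Subt d r → Subt d (.nd s l r)

section

variable {A : Type*}

/-- The number of leaves of any derivation tree whose root derives `s`. The subtraction is
exact because trees have at least one leaf; this is what makes `weight` additive under every
normal-form rule (`combineOK.weight_eq`). -/
def TcVal.weight : TcVal A → ℕ
  | .tree t => 2 * t.numLeaves - 1
  | .ctx c => 2 * c.size

theorem BTree.one_le_numLeaves_s13 (t : BTree A) : 1 ≤ t.numLeaves := by
  induction t with
  | leaf => rfl
  | node _ l r ihl _ => exact ihl.trans (Nat.le_add_right _ _)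

theorem Ctx.numLeaves_subst (c : Ctx A) (t : BTree A) :
    (c.subst t).numLeaves = c.size + t.numLeaves := by
  induction c with
  | hole => simp [Ctx.subst, Ctx.size]
  | left _ c s ih => simp only [Ctx.subst, Ctx.size, BTree.numLeaves, ih]; omega
  | right _ s c ih => simp only [Ctx.subst, Ctx.size, BTree.numLeaves, ih]; omega

theorem Ctx.size_comp (c d : Ctx A) :
    (c.comp d).size = c.size + d.size := by
  induction c with
  | hole => simp [Ctx.comp, Ctx.size]
  | left _ c s ih => simp only [Ctx.comp, Ctx.size, ih]; omega
  | right _ s c ih => simp only [Ctx.comp, Ctx.size, ih]; omega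

theorem combineOK.weight_eq {l r s : TcVal A} (h : combineOK l r s) :
    s.weight = l.weight + r.weight := by
  cases h with
  | subst _ t =>
    have := t.one_le_numLeaves_s13
    simp only [TcVal.weight, Ctx.numLeaves_subst]; omega
  | comp => simp only [TcVal.weight, Ctx.size_comp]; omega
  | leftArg _ t =>
    have := t.one_le_numLeaves_s13
    simp only [TcVal.weight, Ctx.size, BTree.numLeaves]; omega
  | rightArg _ t =>
    have := t.one_le_numLeaves_s13
    simp only [TcVal.weight, Ctx.size, BTree.numLeaves]; omega

theorem DTree.consistent.numLeaves_eq_weight {d : DTree A}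
    (hd : d.consistent) : d.numLeaves = d.root.weight := by
  induction d with
  | lf s =>
    obtain ⟨a, rfl⟩ := hd
    rfl
  | nd s l r ihl ihr =>
    obtain ⟨hcomb, hl, hr⟩ := hd
    rw [DTree.numLeaves, ihl hl, ihr hr, DTree.root, hcomb.weight_eq]

theorem Subt.consistent {d D : DTree A} (h : Subt d D)
    (hD : D.consistent) : d.consistent := by
  induction h with
  | refl => exact hD
  | left _ _ _ ih => exact ih hD.2.1
  | right _ _ _ ih => exact ih hD.2.2

end

/-- For every node `u` of the derivation tree of a normal-form TSLP: if the
derived value `s_u` is a tree then `2|s_u| − 1` equals the number of leaves of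
the subtree rooted at `u`, and if `s_u` is a context then `2|s_u|` equals that
number of leaves. -/
theorem derived_size_eq_leaves {A : Type*} (D d : DTree A)
    (hcons : D.consistent) (hsub : Subt d D) :
    (∀ t : BTree A, d.root = .tree t → 2 * t.numLeaves - 1 = d.numLeaves) ∧
    (∀ c : Ctx A, d.root = .ctx c → 2 * c.size = d.numLeaves) := by
  have hweight := (hsub.consistent hcons).numLeaves_eq_weight
  refine ⟨fun _ h => ?_, fun _ h => ?_⟩ <;> rw [hweight, h] <;> rfl
end

section
/- For the strings S_n defined by S₁ = baa and S_n = b·S_{n−1}·S_{n−1}, and for every 1 ≤ m ≤ n: the number of occurrences of b^m as a factor of S_n is 2^{n−m+1} − 1, and exactly 2^{n−m} of these occurrences are immediately followed by the character a. -/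
/-!
Since `S (n + 1) = b · S n · S n` and `S n` ends with `a`, no occurrence of a word `b^k` or
`b^k a` straddles the two copies of `S n`. Hence the number of occurrences of such a word `p`
satisfies `#p(S (n + 1)) = 2 · #p(S n) + [p is a prefix of S (n + 1)]`, and `S (n + 1)` begins
with `b^(n + 1) a`. Starting from the fact that `b^(n + 1)` does not occur in `S n`, the
recurrences solve to `2^(n - m + 1) - 1` and `2^(n - m)`.
-/

/-- The strings `S n` over `{a, b}` (here `a = false`, `b = true`), with
`S 1 = baa` and `S (n+1) = b · S n · S n`. -/
def S : ℕ → List Bool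
  | 0 => []
  | 1 => [true, false, false]
  | (n+2) => true :: (S (n+1) ++ S (n+1))

namespace List

variable {α : Type*}

theorem replicate_prefix_replicate_append_cons_iff {a b : α} (hab : a ≠ b) {m n : ℕ}
    {t : List α} : replicate m a <+: replicate n a ++ b :: t ↔ m ≤ n := by
  constructor
  · intro h
    by_contra! hnm
    have h' : replicate n a ++ [a] <+: replicate n a ++ b :: t := by
      refine IsPrefix.trans ?_ h
      rw [← replicate_succ']
      exact prefix_replicate_iff.mpr ⟨by simpa, by simp⟩
    simp only [prefix_append_right_inj, cons_prefix_cons, nil_prefix, and_true] at h'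
    exact hab h'
  · intro h
    exact (prefix_replicate_iff.mpr ⟨by simpa, by simp⟩).trans (prefix_append _ _)

theorem replicate_concat_prefix_replicate_append_cons_iff {a b : α} (hab : a ≠ b) {m n : ℕ}
    {t : List α} : replicate m a ++ [b] <+: replicate n a ++ b :: t ↔ m = n := by
  constructor
  · intro h
    have hmn : m ≤ n :=
      (replicate_prefix_replicate_append_cons_iff hab).mp ((prefix_append _ _).trans h)
    obtain ⟨k, rfl⟩ := Nat.exists_eq_add_of_le hmn
    rw [replicate_add, append_assoc, prefix_append_right_inj] at h
    cases k with
    | zero => rfl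
    | succ k =>
      simp only [replicate_succ, cons_append, cons_prefix_cons, nil_prefix, and_true] at h
      exact absurd h.symm hab
  · rintro rfl
    exact (prefix_append_right_inj _).mpr (by simp)

theorem prefix_append_iff_of_notMem_dropLast {p u v : List α} {x : α}
    (hp : x ∉ p.dropLast) : p <+: u ++ [x] ++ v ↔ p <+: u ++ [x] := by
  refine ⟨fun h => ?_, fun h => h.trans (prefix_append _ _)⟩
  rcases le_or_gt p.length (u ++ [x]).length with hle | hlt
  · exact prefix_of_prefix_length_le h (prefix_append _ _) hle
  · obtain ⟨r, rfl⟩ := prefix_of_prefix_length_le (prefix_append _ _) h hlt.le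
    have hr : r ≠ [] := by rintro rfl; simp at hlt
    rw [dropLast_append_of_ne_nil hr] at hp
    simp at hp

end List

section Occurrences

variable {α : Type*} [DecidableEq α]

def countOccurrences (p l : List α) : ℕ :=
  Nat.count (fun i => p <+: l.drop i) l.length

theorem countOccurrences_cons (p l : List α) (x : α) :
    countOccurrences p (x :: l) = countOccurrences p l + if p <+: x :: l then 1 else 0 := by
  simp [countOccurrences, Nat.count_succ']

theorem countOccurrences_append_le (p q l : List α) :
    countOccurrences (p ++ q) l ≤ countOccurrences p l :=
  Nat.count_mono_left fun _ _ h => (List.prefix_append p q).trans h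

theorem countOccurrences_append_of_getLast? {p u v : List α} {x : α}
    (hu : u.getLast? = some x) (hp : x ∉ p.dropLast) :
    countOccurrences p (u ++ v) = countOccurrences p u + countOccurrences p v := by
  obtain ⟨w, rfl⟩ := List.getLast?_eq_some_iff.mp hu
  have hleft : ∀ i < (w ++ [x]).length,
      p <+: (w ++ [x] ++ v).drop i ↔ p <+: (w ++ [x]).drop i := by
    intro i hi
    have hiw : i ≤ w.length := by simpa [Nat.lt_succ_iff] using hi
    rw [List.drop_append_of_le_length hi.le, List.drop_append_of_le_length hiw]
    exact List.prefix_append_iff_of_notMem_dropLast hp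
  rw [countOccurrences, List.length_append, Nat.count_add]
  congr 1
  · exact le_antisymm (Nat.count_mono_left fun i hi => (hleft i hi).mp)
      (Nat.count_mono_left fun i hi => (hleft i hi).mpr)
  · simp only [List.drop_length_add_append]
    rfl

theorem countOccurrences_eq_card_filter (p l : List α) :
    countOccurrences p l =
      ((Finset.range l.length).filter (fun i => (l.drop i).take p.length = p)).card := by
  rw [countOccurrences, Nat.count_eq_card_filter_range]
  exact congrArg Finset.card
    (Finset.filter_congr fun _ _ => List.prefix_iff_eq_take.trans eq_comm)

end Occurrences

open List

theorem S_succ {n : ℕ} (hn : 1 ≤ n) : S (n + 1) = true :: (S n ++ S n) := by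
  obtain ⟨k, rfl⟩ := Nat.exists_eq_add_of_le' hn
  rfl

theorem S_getLast? {n : ℕ} (hn : 1 ≤ n) : (S n).getLast? = some false := by
  induction n, hn using Nat.le_induction with
  | base => rfl
  | succ n hn ih => simp [S_succ hn, List.getLast?_cons, List.getLast?_append, ih]

theorem S_eq_replicate_append {n : ℕ} (hn : 1 ≤ n) :
    ∃ t, S n = replicate n true ++ false :: t := by
  induction n, hn using Nat.le_induction with
  | base => exact ⟨[false], rfl⟩
  | succ n hn ih =>
    obtain ⟨t, ht⟩ := ih
    refine ⟨t ++ S n, ?_⟩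
    rw [S_succ hn]
    nth_rewrite 1 [ht]
    simp [replicate_succ]

theorem replicate_prefix_S_iff {n : ℕ} (hn : 1 ≤ n) {m : ℕ} :
    replicate m true <+: S n ↔ m ≤ n := by
  obtain ⟨t, ht⟩ := S_eq_replicate_append hn
  rw [ht]
  exact replicate_prefix_replicate_append_cons_iff (by decide)

theorem replicate_concat_false_prefix_S_iff {n : ℕ} (hn : 1 ≤ n) {m : ℕ} :
    replicate m true ++ [false] <+: S n ↔ m = n := by
  obtain ⟨t, ht⟩ := S_eq_replicate_append hn
  rw [ht]
  exact replicate_concat_prefix_replicate_append_cons_iff (by decide)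

theorem countOccurrences_S_succ {p : List Bool} (hp : false ∉ p.dropLast) {n : ℕ}
    (hn : 1 ≤ n) :
    countOccurrences p (S (n + 1)) =
      2 * countOccurrences p (S n) + if p <+: S (n + 1) then 1 else 0 := by
  rw [S_succ hn, countOccurrences_cons, countOccurrences_append_of_getLast? (S_getLast? hn) hp,
    two_mul]

theorem countOccurrences_replicate_succ_S {n : ℕ} (hn : 1 ≤ n) :
    countOccurrences (replicate (n + 1) true) (S n) = 0 := by
  induction n, hn using Nat.le_induction with
  | base => decide
  | succ n hn ih =>
    have hmono : countOccurrences (replicate (n + 1 + 1) true) (S n) ≤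
        countOccurrences (replicate (n + 1) true) (S n) := by
      rw [replicate_succ']
      exact countOccurrences_append_le _ _ _
    rw [countOccurrences_S_succ (by simp) hn,
      if_neg (by rw [replicate_prefix_S_iff (by omega)]; omega)]
    omega

theorem countOccurrences_replicate_S {m n : ℕ} (hm : 1 ≤ m) (hmn : m ≤ n) :
    countOccurrences (replicate m true) (S n) = 2 ^ (n - m + 1) - 1 := by
  induction n, hmn using Nat.le_induction with
  | base =>
    rcases hm.eq_or_lt with rfl | hm
    · decide
    · obtain ⟨k, rfl⟩ : ∃ k, m = k + 1 + 1 := ⟨m - 2, by omega⟩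
      rw [countOccurrences_S_succ (by simp) (by omega),
        countOccurrences_replicate_succ_S (by omega),
        if_pos ((replicate_prefix_S_iff (by omega)).mpr le_rfl)]
      simp
  | succ n hmn ih =>
    rw [countOccurrences_S_succ (by simp) (hm.trans hmn), ih,
      if_pos ((replicate_prefix_S_iff (by omega)).mpr (by omega)),
      show n + 1 - m + 1 = n - m + 1 + 1 by omega, pow_succ]
    have := Nat.one_le_two_pow (n := n - m + 1)
    omega

theorem countOccurrences_replicate_concat_false_S {m n : ℕ} (hm : 1 ≤ m) (hmn : m ≤ n) :
    countOccurrences (replicate m true ++ [false]) (S n) = 2 ^ (n - m) := by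
  induction n, hmn using Nat.le_induction with
  | base =>
    rcases hm.eq_or_lt with rfl | hm
    · decide
    · obtain ⟨k, rfl⟩ : ∃ k, m = k + 1 + 1 := ⟨m - 2, by omega⟩
      have h0 := (countOccurrences_append_le _ [false] (S (k + 1))).trans
        (countOccurrences_replicate_succ_S (n := k + 1) (by omega)).le
      rw [countOccurrences_S_succ (by simp) (by omega),
        if_pos ((replicate_concat_false_prefix_S_iff (by omega)).mpr rfl), Nat.sub_self, pow_zero]
      omega
  | succ n hmn ih =>
    rw [countOccurrences_S_succ (by simp) (hm.trans hmn), ih,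
      if_neg (by rw [replicate_concat_false_prefix_S_iff (by omega)]; omega),
      show n + 1 - m = n - m + 1 by omega, pow_succ]
    ring

/-- For every `1 ≤ m ≤ n`: the number of occurrences of `b^m` as a factor of
`S n` is `2^(n−m+1) − 1`, and exactly `2^(n−m)` of these occurrences are
immediately followed by the character `a`. -/
theorem count_bm_occurrences (n m : ℕ) (hm : 1 ≤ m) (hmn : m ≤ n) :
    ((Finset.range (S n).length).filter
        (fun i => ((S n).drop i).take m = List.replicate m true)).card =
      2 ^ (n - m + 1) - 1 ∧
    ((Finset.range (S n).length).filter
        (fun i => ((S n).drop i).take (m + 1) =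
          List.replicate m true ++ [false])).card = 2 ^ (n - m) := by
  have hR := countOccurrences_replicate_S hm hmn
  have hF := countOccurrences_replicate_concat_false_S hm hmn
  rw [countOccurrences_eq_card_filter] at hR hF
  simp only [length_replicate, length_append, length_singleton] at hR hF
  exact ⟨hR, hF⟩
end

section
/- For every 1 ≤ k < n, the k-th order empirical entropy of the string S_n (with S₁ = baa, S_n = b·S_{n−1}·S_{n−1}) satisfies H_k(S_n) ≥ 2^{n−k}, although there exists a straight-line program of size 3n generating S_n. -/
/-- A straight-line program over the alphabet `α`: a context-free grammar with
nonterminals `0, ..., m−1` in which every nonterminal has exactly one rule and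
rules only refer to nonterminals of larger index (which makes the grammar
acyclic), so that the grammar derives exactly one string from each
nonterminal. -/
structure SLP (α : Type*) where
  m : ℕ
  rhs : Fin m → List (Fin m ⊕ α)
  wf : ∀ i j, Sum.inl j ∈ rhs i → (i : ℕ) < (j : ℕ)

/-- The size of an SLP: the total length of all right-hand sides. -/
def SLP.size {α : Type*} (G : SLP α) : ℕ := ∑ i, (G.rhs i).length

/-- The string derived from a nonterminal of an SLP. -/
def SLP.expand {α : Type*} (G : SLP α) (i : Fin G.m) : List α :=
  (G.rhs i).attach.flatMap (fun x =>
    match hx : x.val with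
    | Sum.inl j => G.expand j
    | Sum.inr a => [a])
termination_by G.m - i
decreasing_by
  exact Nat.sub_lt_sub_left i.isLt (G.wf i j (hx ▸ x.property))

/-- The string `w(α)` of characters immediately following the occurrences of
the pattern `α` in `w` (occurrences of `α` as a suffix are dropped). -/
def followStr (w pat : List Bool) : List Bool :=
  (List.range w.length).filterMap (fun i =>
    if ((w.drop i).take pat.length) = pat then w[(i + pat.length)]? else none)

/-- The unnormalized empirical entropy of a string over `{a, b}`. -/
noncomputable def Hstr (u : List Bool) : ℝ :=
  ∑ x : Bool, (u.count x : ℝ) * Real.logb 2 ((u.length : ℝ) / (u.count x : ℝ))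

/-- The `k`-th order (unnormalized) empirical entropy of a string over `{a,b}`:
`H_k(w) = ∑_{α ∈ Σ^k} H(w(α))`. -/
noncomputable def HkStr (k : ℕ) (w : List Bool) : ℝ :=
  ∑ f : Fin k → Bool, Hstr (followStr w (List.ofFn f))

/-!
Re-index `S` as `T` with `T 0 = a` and `T (n+1) = b · T n · T n`. Since `T n` starts with
`b^n a` and ends with `a`, an occurrence of `b^k` in `T (n+1)` either starts at position `0`
(followed by `b` if `k ≤ n`, by `a` if `k = n + 1`) or lies inside one of the two copies of
`T n`. Hence the characters following `b^k` in `T (k+d)` spell exactly `T d`, a string with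
`2^d` letters `a` and `2^d - 1` letters `b`, whose entropy is at least `2^d`; `H_k` dominates
this single summand. The SLP has the rules `X_i → b X_{i+1} X_{i+1}`, where `X_n` stands for `a`.
-/

def followHead (w pat : List Bool) : List Bool :=
  if w.take pat.length = pat then (w[pat.length]?).toList else []

theorem followStr_nil (pat : List Bool) : followStr [] pat = [] := rfl

theorem followStr_cons (x : Bool) (w pat : List Bool) :
    followStr (x :: w) pat = followHead (x :: w) pat ++ followStr w pat := by
  unfold followStr followHead
  rw [List.length_cons, List.range_succ_eq_map, List.filterMap_cons, List.filterMap_map,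
    List.drop_zero, Nat.zero_add]
  split_ifs <;> cases (x :: w)[pat.length]? <;> simp [Nat.succ_add]

theorem followHead_append_of_mem {x : Bool} {w pat : List Bool} (hx : x ∉ pat) (hxw : x ∈ w)
    (v : List Bool) : followHead (w ++ v) pat = followHead w pat := by
  unfold followHead
  by_cases h : pat.length < w.length
  · rw [List.take_append_of_le_length h.le, List.getElem?_append_left h]
  · have hw : w <+: (w ++ v).take pat.length := by
      rw [List.take_append, List.take_of_length_le (by omega)]
      exact List.prefix_append _ _
    have hne : ∀ l, w <+: l → l ≠ pat := fun l hl hl' => hx (hl' ▸ hl.subset hxw)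
    rw [if_neg (hne _ hw), if_neg (hne _ (by rw [List.take_of_length_le (by omega)]))]

theorem followStr_append_cons {x : Bool} {pat : List Bool} (hx : x ∉ pat) (u v : List Bool) :
    followStr (u ++ x :: v) pat = followStr (u ++ [x]) pat ++ followStr v pat := by
  induction u with
  | nil =>
    have head := followHead_append_of_mem hx (List.mem_singleton_self x) v
    rw [List.singleton_append] at head
    rw [List.nil_append, List.nil_append, followStr_cons, followStr_cons, followStr_nil,
      List.append_nil, head]
  | cons y u ih =>
    have head := followHead_append_of_mem hx (w := y :: u ++ [x]) (by simp) v
    simp only [List.cons_append, List.append_assoc, List.nil_append] at head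
    rw [List.cons_append, followStr_cons, ih, List.cons_append, followStr_cons, head,
      List.append_assoc]

theorem Hstr_nonneg (u : List Bool) : 0 ≤ Hstr u := by
  refine Finset.sum_nonneg fun x _ => ?_
  rcases (u.count x).eq_zero_or_pos with h | h
  · simp [h]
  · refine mul_nonneg (Nat.cast_nonneg _) (Real.logb_nonneg one_lt_two ?_)
    rw [le_div_iff₀ (by exact_mod_cast h), one_mul]
    exact_mod_cast List.count_le_length

theorem Hstr_followStr_le_HkStr (k : ℕ) (w : List Bool) (f : Fin k → Bool) :
    Hstr (followStr w (List.ofFn f)) ≤ HkStr k w :=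
  Finset.single_le_sum (f := fun f : Fin k → Bool => Hstr (followStr w (List.ofFn f)))
    (fun _ _ => Hstr_nonneg _) (Finset.mem_univ f)

theorem le_Hstr_of_count_true_add_one {u : List Bool} {c : ℕ} (hc : 2 ≤ c)
    (hfalse : u.count false = c) (htrue : u.count true + 1 = c) : (c : ℝ) ≤ Hstr u := by
  have hlen : (u.length : ℝ) = 2 * c - 1 := by
    rw [← List.count_true_add_count_false, Nat.cast_add, hfalse, ← htrue]; push_cast; ring
  have htrue' : (u.count true : ℝ) = c - 1 := by rw [← htrue]; push_cast; ring
  have hc' : (2 : ℝ) ≤ c := by exact_mod_cast hc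
  -- each `b` contributes at least one bit and each `a` at least half a bit: `c - 1 + c/2 ≥ c`
  have hb : 1 ≤ Real.logb 2 ((2 * c - 1) / (c - 1)) := by
    rw [Real.le_logb_iff_rpow_le one_lt_two (by apply div_pos <;> linarith), Real.rpow_one,
      le_div_iff₀ (by linarith)]
    linarith
  have ha : 1 / 2 ≤ Real.logb 2 ((2 * c - 1) / c) := by
    rw [Real.le_logb_iff_rpow_le one_lt_two (by apply div_pos <;> linarith),
      ← Real.sqrt_eq_rpow, Real.sqrt_le_iff]
    have h32 : 3 / 2 ≤ (2 * (c : ℝ) - 1) / c := by rw [le_div_iff₀ (by linarith)]; linarith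
    constructor <;> nlinarith
  rw [Hstr, Fintype.sum_bool, hfalse, htrue', hlen]
  nlinarith

def T : ℕ → List Bool
  | 0 => [false]
  | n + 1 => true :: (T n ++ T n)

theorem T_succ_eq_S (n : ℕ) : T (n + 1) = S (n + 1) := by
  induction n with
  | zero => rfl
  | succ n ih => rw [T, ih]; rfl

theorem T_eq_replicate_append (n : ℕ) : ∃ t, T n = List.replicate n true ++ false :: t := by
  induction n with
  | zero => exact ⟨[], rfl⟩
  | succ n ih =>
    obtain ⟨t, ht⟩ := ih
    exact ⟨t ++ T n, by rw [T, List.replicate_succ, ht]; simp⟩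

theorem T_eq_append_false (n : ℕ) : ∃ t, T n = t ++ [false] := by
  induction n with
  | zero => exact ⟨[], rfl⟩
  | succ n ih =>
    obtain ⟨t, ht⟩ := ih
    exact ⟨true :: (T n ++ t), by rw [T, ht]; simp⟩

theorem take_T_eq_replicate_iff {k n : ℕ} : (T n).take k = List.replicate k true ↔ k ≤ n := by
  obtain ⟨t, ht⟩ := T_eq_replicate_append n
  rw [ht]
  constructor
  · intro h
    by_contra hnk
    have := congrArg (·[n]?) h
    simp [Nat.lt_of_not_le hnk] at this
  · intro h
    rw [List.take_append_of_le_length (by simpa), List.take_replicate, min_eq_left h]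

theorem getElem?_T {k n : ℕ} (h : k ≤ n) : (T n)[k]? = some (decide (k < n)) := by
  obtain ⟨t, ht⟩ := T_eq_replicate_append n
  rw [ht]
  rcases h.lt_or_eq with h | rfl
  · simp [List.getElem?_append_left, h]
  · simp

theorem count_false_T (n : ℕ) : (T n).count false = 2 ^ n := by
  induction n with
  | zero => rfl
  | succ n ih => rw [T, List.count_cons_of_ne (by decide), List.count_append, ih, pow_succ, mul_two]

theorem count_true_T (n : ℕ) : (T n).count true + 1 = 2 ^ n := by
  induction n with
  | zero => rfl
  | succ n ih => rw [T, List.count_cons_self, List.count_append, pow_succ]; omega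

theorem two_pow_le_Hstr_T {d : ℕ} (hd : 1 ≤ d) : (2 : ℝ) ^ d ≤ Hstr (T d) := by
  exact_mod_cast le_Hstr_of_count_true_add_one (Nat.le_self_pow (by omega) 2)
    (count_false_T d) (count_true_T d)

theorem followStr_T_zero (k : ℕ) :
    followStr (T 0) (List.replicate k true) = if k = 0 then [false] else [] := by
  cases k <;> rfl

theorem followStr_T_succ (k n : ℕ) :
    followStr (T (n + 1)) (List.replicate k true) =
      (if k ≤ n + 1 then [decide (k < n + 1)] else []) ++
        (followStr (T n) (List.replicate k true) ++ followStr (T n) (List.replicate k true)) := by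
  have hx : false ∉ List.replicate k true := by simp
  obtain ⟨t, ht⟩ := T_eq_append_false n
  have hsplit : followStr (T n ++ T n) (List.replicate k true) =
      followStr (T n) (List.replicate k true) ++ followStr (T n) (List.replicate k true) := by
    nth_rw 1 [ht]
    rw [List.append_assoc, List.singleton_append, followStr_append_cons hx, ← ht]
  rw [T, followStr_cons, ← T, hsplit, followHead, List.length_replicate]
  simp only [take_T_eq_replicate_iff]
  split_ifs with h
  · rw [getElem?_T h]; rfl
  · rfl

theorem followStr_T_of_lt {k n : ℕ} (h : n < k) :
    followStr (T n) (List.replicate k true) = [] := by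
  induction n with
  | zero => rw [followStr_T_zero, if_neg (by omega)]
  | succ n ih => rw [followStr_T_succ, if_neg (by omega), ih (by omega)]; rfl

theorem followStr_T_add (k d : ℕ) : followStr (T (k + d)) (List.replicate k true) = T d := by
  induction d with
  | zero =>
    cases k with
    | zero => rfl
    | succ k =>
      rw [followStr_T_succ, if_pos le_rfl, followStr_T_of_lt (Nat.lt_succ_self k)]
      simp [T]
  | succ d ih => rw [← add_assoc, followStr_T_succ, if_pos (by omega), ih]; simp [T]

theorem SLP.expand_eq {α : Type*} (G : SLP α) (i : Fin G.m) :
    G.expand i = (G.rhs i).flatMap (Sum.elim G.expand fun a => [a]) := by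
  rw [SLP.expand]
  conv_rhs => rw [← List.attach_map_subtype_val (G.rhs i), List.flatMap_map]
  refine List.flatMap_congr fun x _ => ?_
  rcases x with ⟨_ | _, _⟩ <;> rfl
def slpT (n : ℕ) : SLP Bool where
  m := n
  rhs i :=
    let child : Fin n ⊕ Bool := if h : i.1 + 1 < n then .inl ⟨i + 1, h⟩ else .inr false
    [.inr true, child, child]
  wf i j hj := by
    split_ifs at hj with h <;> simp at hj
    subst hj; simp

theorem slpT_size (n : ℕ) : (slpT n).size = 3 * n := by
  have hlen : ∀ i, ((slpT n).rhs i).length = 3 := fun _ => rfl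
  rw [SLP.size, Finset.sum_congr rfl fun i _ => hlen i, Finset.sum_const, Finset.card_univ,
    Fintype.card_fin, smul_eq_mul, mul_comm]
  rfl

theorem slpT_expand_eq (n : ℕ) (i : Fin (slpT n).m) :
    (slpT n).expand i =
      let child := if h : i.1 + 1 < n then (slpT n).expand ⟨i + 1, h⟩ else [false]
      true :: (child ++ child) := by
  rw [SLP.expand_eq]
  split_ifs <;> simp [slpT, *]

theorem slpT_expand (n : ℕ) (i : Fin (slpT n).m) : (slpT n).expand i = T (n - i) := by
  suffices ∀ j (i : Fin (slpT n).m), i + j + 1 = n → (slpT n).expand i = T (j + 1) by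
    have hi : (i : ℕ) < n := i.isLt
    rw [this (n - i - 1) i (by omega), show n - i - 1 + 1 = n - i by omega]
  intro j
  induction j with
  | zero =>
    intro i hi
    rw [slpT_expand_eq, dif_neg (by omega)]
    rfl
  | succ j ih =>
    intro i hi
    rw [slpT_expand_eq, dif_pos (by omega), ih _ (by simp; omega)]
    rfl

theorem HkStr_S_lower_bound_general (n k : ℕ) (hkn : k < n) :
    2 ^ (n - k) ≤ HkStr k (S n) ∧
      ∃ (G : SLP Bool) (h : 0 < G.m), G.size = 3 * n ∧ G.expand ⟨0, h⟩ = S n := by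
  obtain ⟨d, rfl⟩ : ∃ d, n = k + d + 1 := ⟨n - k - 1, by omega⟩
  constructor
  · have hfollow : followStr (S (k + d + 1)) (List.ofFn fun _ : Fin k => true) = T (d + 1) := by
      rw [← T_succ_eq_S, List.ofFn_const, add_assoc, followStr_T_add]
    calc (2 : ℝ) ^ (k + d + 1 - k) = 2 ^ (d + 1) := by rw [add_assoc, Nat.add_sub_cancel_left]
      _ ≤ Hstr (T (d + 1)) := two_pow_le_Hstr_T d.succ_pos
      _ ≤ HkStr k (S (k + d + 1)) := hfollow ▸ Hstr_followStr_le_HkStr k _ _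
  · refine ⟨slpT (k + d + 1), Nat.succ_pos _, slpT_size _, ?_⟩
    rw [slpT_expand, Nat.sub_zero, T_succ_eq_S]

/-- For every `1 ≤ k < n`, the `k`-th order empirical entropy of `S n`
satisfies `H_k(S n) ≥ 2^(n−k)`, although there is a straight-line program of
size `3n` generating `S n`. -/
theorem HkStr_S_lower_bound (n k : ℕ) (hk : 1 ≤ k) (hkn : k < n) :
    2 ^ (n - k) ≤ HkStr k (S n) ∧
      ∃ (G : SLP Bool) (h : 0 < G.m), G.size = 3 * n ∧ G.expand ⟨0, h⟩ = S n :=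
  HkStr_S_lower_bound_general n k hkn
end
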